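/- arXiv:2407.05763 — 3 statements merged into one kernel-verified Lean document; each statement's English description precedes it below -/
import Mathlib

section
/- Let n, N, p₁, …, p_N ∈ ℕ₊, A ∈ ℝ^{n×n}, C_i ∈ ℝ^{p_i×n}, and let C ∈ ℝ^{p×n} (p = Σp_i) stack the C_i. Suppose there exist a symmetric positive definite P_a ∈ ℝ^{n×n}, Y ∈ ℝ^{n×p} and ρ > 0 with P_aA + AᵀP_a + YC + CᵀYᵀ + 2ρP_a ≺ 0. Partition H̄ = P_a⁻¹Y = (H̄₁, …, H̄_N) with H̄_i ∈ ℝ^{n×p_i}. Let L ∈ ℝ^{N×N}, ζ ∈ ℝ^N with ζ_i > 0, ζᵀ1_N = 1, L·1_N = 0, ζᵀL = 0, and let Y₁, Y₂ ∈ ℝ^{N×(N−1)} satisfy Y₂ᵀY₁ = I_{N−1}, ζᵀY₁ = 0, Y₂ᵀ1_N = 0, and Δ = Y₂ᵀLY₁ has Δᵀ + Δ ≻ 0. Set H_i = H̄_i/ζ_i, Ã = I_N ⊗ A, H̃ = diag{H_i}, C̃ = diag{C_i}. Then there exist ν₀ > 0 and κ > 0 such that for every ν ≥ ν₀, every differentiable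 function e : [0,∞) → ℝ^{Nn} satisfying ė(t) = (Ã + H̃C̃ − ν(L ⊗ I_n))e(t) for all t ≥ 0 satisfies ‖e(t)‖ ≤ κ·e^{−ρt}·‖e(0)‖ for all t ≥ 0. -/
/-
Statement 1 (Lemma 3, exponential-stability part).
N ≥ 1 agents are encoded as N = mN + 1 (so that the Lemma-1 matrices Y₁, Y₂ have
N - 1 = mN columns).  The stacked output matrix C and the block matrices
Ã = I_N ⊗ A, H̃ = diag{H_i}, C̃ = diag{C_i} are built explicitly; sigma types
index the stacked outputs.  M ≺ 0 is encoded as (-M).PosDef.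
-/

open Matrix
open scoped Kronecker

/-- The Euclidean norm of a finitely-indexed real vector. -/
noncomputable def euclNorm {ι : Type*} [Fintype ι] (x : ι → ℝ) : ℝ :=
  Real.sqrt (x ⬝ᵥ x)

/-
The relations on `ζ, Y₁, Y₂` give the resolution `1ζᵀ + Y₁Y₂ᵀ = I`, so an error
vector splits into its `ζ`-average `(ζᵀ ⊗ I)e` and its disagreement `d = (Y₂ᵀ ⊗ I)e`, and the
Lyapunov function `V(e) = eᵀPe` with `P = ζζᵀ ⊗ Pa + Y₂Y₂ᵀ ⊗ I ≻ 0` is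
`((ζᵀ ⊗ I)e)ᵀ Pa ((ζᵀ ⊗ I)e) + ‖d‖²`.  Because `ζᵀL = 0` and `Y₂ᵀL = ΔY₂ᵀ`, the coupling
`-ν(L ⊗ I)` contributes `-ν dᵀ((Δᵀ + Δ) ⊗ I)d ≤ 0` to `V̇`, which vanishes exactly on the
consensus vectors `e = 1 ⊗ v`; there the rest of `V̇ + 2ρV` equals
`vᵀ(PaA + AᵀPa + YC + CᵀYᵀ + 2ρPa)v < 0`.  A compactness argument on the unit sphere (Finsler's
lemma) yields `ν₀` with `V̇ ≤ -2ρV` for all `ν ≥ ν₀`, and Grönwall's inequality together with the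
equivalence of `V` and `‖·‖²` gives the bound, with `κ` depending on `P` only.
-/

section Finsler

variable {E : Type*} [NormedAddCommGroup E] [NormedSpace ℝ E] [FiniteDimensional ℝ E]

theorem exists_forall_le_mul_of_homogeneous {f g : E → ℝ} (hf : Continuous f) (hg : Continuous g)
    (hf₂ : ∀ (c : ℝ) x, f (c • x) = c ^ 2 * f x) (hg₂ : ∀ (c : ℝ) x, g (c • x) = c ^ 2 * g x)
    (hg₀ : ∀ x, 0 ≤ g x) (hfg : ∀ x ≠ 0, g x = 0 → f x < 0) :
    ∃ ν₀ > 0, ∀ ν ≥ ν₀, ∀ x, f x ≤ ν * g x := by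
  have hS : IsCompact (Metric.sphere (0 : E) 1) := isCompact_sphere 0 1
  set T := Metric.sphere (0 : E) 1 ∩ {x | 0 ≤ f x}
  have hT : IsCompact T := hS.inter_right (isClosed_le continuous_const hf)
  have hgT : ∀ x ∈ T, 0 < g x := fun x hx =>
    (hg₀ x).lt_of_ne fun h => (hfg x (ne_zero_of_mem_unit_sphere ⟨x, hx.1⟩) h.symm).not_ge hx.2
  obtain ⟨m, hm, hmT⟩ := hT.exists_forall_le' hg.continuousOn hgT
  obtain ⟨C, hC⟩ := (hS.image hf).bddAbove
  refine ⟨|C| / m + 1, by positivity, fun ν hν => ?_⟩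
  have hν₀ : 0 ≤ ν := le_trans (by positivity) hν
  have hsphere : ∀ u ∈ Metric.sphere (0 : E) 1, f u ≤ ν * g u := by
    intro u hu
    by_cases hfu : 0 ≤ f u
    · calc f u ≤ |C| := (hC ⟨u, hu, rfl⟩).trans (le_abs_self C)
        _ ≤ (|C| / m + 1) * m := by rw [add_mul, div_mul_cancel₀ _ hm.ne']; linarith
        _ ≤ ν * g u := mul_le_mul hν (hmT u ⟨hu, hfu⟩) hm.le hν₀
    · exact (not_le.mp hfu).le.trans (mul_nonneg hν₀ (hg₀ u))
  intro x
  rcases eq_or_ne x 0 with rfl | hx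
  · rw [show f 0 = 0 by simpa using hf₂ 0 0, show g 0 = 0 by simpa using hg₂ 0 0, mul_zero]
  have hx' : ‖x‖ ≠ 0 := norm_ne_zero_iff.mpr hx
  rw [← one_smul ℝ x, ← mul_inv_cancel₀ hx', ← smul_smul, hf₂, hg₂, mul_left_comm]
  refine mul_le_mul_of_nonneg_left (hsphere _ ?_) (sq_nonneg _)
  rw [mem_sphere_zero_iff_norm, norm_smul, norm_inv, norm_norm, inv_mul_cancel₀ hx']

end Finsler

namespace Matrix

variable {ι : Type*} [Fintype ι]

theorem continuous_dotProduct_mulVec (M : Matrix ι ι ℝ) :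
    Continuous fun x : ι → ℝ => x ⬝ᵥ M *ᵥ x := by
  fun_prop

theorem smul_dotProduct_mulVec_smul (M : Matrix ι ι ℝ) (c : ℝ) (x : ι → ℝ) :
    c • x ⬝ᵥ M *ᵥ (c • x) = c ^ 2 * (x ⬝ᵥ M *ᵥ x) := by
  rw [mulVec_smul, dotProduct_smul, smul_dotProduct, smul_eq_mul, smul_eq_mul]
  ring

theorem exists_forall_dotProduct_mulVec_le_mul {K₀ K₁ : Matrix ι ι ℝ}
    (h₁ : ∀ x, 0 ≤ x ⬝ᵥ K₁ *ᵥ x) (h₀ : ∀ x ≠ 0, x ⬝ᵥ K₁ *ᵥ x = 0 → x ⬝ᵥ K₀ *ᵥ x < 0) :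
    ∃ ν₀ > 0, ∀ ν ≥ ν₀, ∀ x, x ⬝ᵥ K₀ *ᵥ x ≤ ν * (x ⬝ᵥ K₁ *ᵥ x) :=
  exists_forall_le_mul_of_homogeneous (continuous_dotProduct_mulVec K₀)
    (continuous_dotProduct_mulVec K₁) (smul_dotProduct_mulVec_smul K₀)
    (smul_dotProduct_mulVec_smul K₁) h₁ h₀

theorem PosDef.exists_dotProduct_mulVec_le_mul {P : Matrix ι ι ℝ} (hP : P.PosDef)
    (K : Matrix ι ι ℝ) : ∃ c > 0, ∀ x, x ⬝ᵥ K *ᵥ x ≤ c * (x ⬝ᵥ P *ᵥ x) := by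
  obtain ⟨c, hc, h⟩ := exists_forall_dotProduct_mulVec_le_mul (K₀ := K)
    (fun x => by simpa using hP.posSemidef.dotProduct_mulVec_nonneg x)
    (fun x hx h0 => absurd h0 (by simpa using (hP.dotProduct_mulVec_pos hx).ne'))
  exact ⟨c, hc, h c le_rfl⟩

end Matrix

section Derivatives

variable {ι : Type*} [Fintype ι] {t : ℝ}

theorem HasDerivAt.dotProduct {u v : ℝ → ι → ℝ} {u' v' : ι → ℝ} (hu : HasDerivAt u u' t)
    (hv : HasDerivAt v v' t) :
    HasDerivAt (fun s => u s ⬝ᵥ v s) (u' ⬝ᵥ v t + u t ⬝ᵥ v') t := by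
  have := HasDerivAt.fun_sum (u := Finset.univ) fun i _ =>
    (hasDerivAt_pi.mp hu i).fun_mul (hasDerivAt_pi.mp hv i)
  simpa only [_root_.dotProduct, Finset.sum_add_distrib] using this

theorem HasDerivAt.matrix_mulVec {κ : Type*} {u : ℝ → ι → ℝ} {u' : ι → ℝ} (M : Matrix κ ι ℝ)
    (hu : HasDerivAt u u' t) : HasDerivAt (fun s => M *ᵥ u s) (M *ᵥ u') t :=
  hasDerivAt_pi.mpr fun k =>
    HasDerivAt.fun_sum fun i _ => (hasDerivAt_pi.mp hu i).const_mul (M k i)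

end Derivatives

theorem le_exp_mul_of_hasDerivAt_le {V V' : ℝ → ℝ} {c : ℝ}
    (hV : ∀ t ≥ 0, HasDerivAt V (V' t) t) (hV' : ∀ t ≥ 0, V' t ≤ -c * V t) {t : ℝ}
    (ht : 0 ≤ t) : V t ≤ Real.exp (-c * t) * V 0 := by
  have := le_gronwallBound_of_liminf_deriv_right_le (f := V) (f' := V') (δ := V 0) (K := -c)
    (ε := 0) (a := 0) (b := t)
    (fun s hs => (hV s hs.1).continuousAt.continuousWithinAt)
    (fun s hs r hr => (hV s hs.1).hasDerivWithinAt.liminf_right_slope_le hr) le_rfl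
    (by simpa using fun s hs _ => hV' s hs) t ⟨ht, le_rfl⟩
  rwa [gronwallBound_ε0, sub_zero, mul_comm] at this

theorem exists_euclNorm_le_of_lyapunov {ι : Type*} [Fintype ι] [DecidableEq ι]
    {P : Matrix ι ι ℝ} (hP : P.PosDef) (ρ : ℝ) :
    ∃ κ > 0, ∀ M : Matrix ι ι ℝ, (∀ x, x ⬝ᵥ (P * M) *ᵥ x ≤ -ρ * (x ⬝ᵥ P *ᵥ x)) →
      ∀ e : ℝ → ι → ℝ, (∀ t ≥ 0, HasDerivAt e (M *ᵥ e t) t) →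
        ∀ t ≥ 0, euclNorm (e t) ≤ κ * Real.exp (-ρ * t) * euclNorm (e 0) := by
  obtain ⟨c₁, hc₁, h₁⟩ := hP.exists_dotProduct_mulVec_le_mul 1
  obtain ⟨c₂, hc₂, h₂⟩ := PosDef.one.exists_dotProduct_mulVec_le_mul P
  simp only [one_mulVec] at h₁ h₂
  refine ⟨√(c₁ * c₂), by positivity, fun M hM e he t ht => ?_⟩
  have hPT : Pᵀ = P := by simpa using hP.isHermitian.eq
  have hV : ∀ s ≥ 0, HasDerivAt (fun s => e s ⬝ᵥ P *ᵥ e s) (2 * (e s ⬝ᵥ (P * M) *ᵥ e s)) s := by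
    intro s hs
    convert (he s hs).dotProduct ((he s hs).matrix_mulVec P) using 1
    rw [two_mul, ← mulVec_mulVec, dotProduct_comm, dotProduct_mulVec, ← mulVec_transpose, hPT]
  have hdecay := le_exp_mul_of_hasDerivAt_le (c := 2 * ρ) hV (fun s _ => by linarith [hM (e s)]) ht
  have hexp : Real.exp (-ρ * t) ^ 2 = Real.exp (-(2 * ρ) * t) := by
    rw [← Real.exp_nat_mul]
    ring_nf
  have hnonneg (x : ι → ℝ) : 0 ≤ x ⬝ᵥ x := by simpa using dotProduct_self_star_nonneg x
  simp only [euclNorm]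
  refine Real.sqrt_le_iff.mpr ⟨by positivity, ?_⟩
  rw [mul_pow, mul_pow, Real.sq_sqrt (by positivity), Real.sq_sqrt (hnonneg _), hexp]
  calc e t ⬝ᵥ e t ≤ c₁ * (e t ⬝ᵥ P *ᵥ e t) := h₁ _
    _ ≤ c₁ * (Real.exp (-(2 * ρ) * t) * (c₂ * (e 0 ⬝ᵥ e 0))) := by
      gcongr
      exact hdecay.trans (mul_le_mul_of_nonneg_left (h₂ _) (Real.exp_nonneg _))
    _ = c₁ * c₂ * Real.exp (-(2 * ρ) * t) * (e 0 ⬝ᵥ e 0) := by ring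

namespace Matrix

variable {ι κ σ : Type*} [Fintype ι] [Fintype κ]

theorem dotProduct_transpose_mul_mul_mulVec {m : Type*} [Fintype m] (B : Matrix m ι ℝ)
    (M : Matrix m m ℝ) (x : ι → ℝ) : x ⬝ᵥ (Bᵀ * M * B) *ᵥ x = B *ᵥ x ⬝ᵥ M *ᵥ (B *ᵥ x) := by
  rw [← mulVec_mulVec, ← mulVec_mulVec, dotProduct_transpose_mulVec, dotProduct_comm]

theorem dotProduct_mulVec_pos_of_posDef_transpose_add {S : Matrix ι ι ℝ} (hS : (Sᵀ + S).PosDef)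
    {x : ι → ℝ} (hx : x ≠ 0) : 0 < x ⬝ᵥ S *ᵥ x := by
  have := hS.dotProduct_mulVec_pos hx
  rw [star_trivial, add_mulVec, dotProduct_add, dotProduct_transpose_mulVec] at this
  linarith

theorem kronecker_mulVec_vec_vecMulVec [Fintype σ] {l m : Type*} (B : Matrix l ι ℝ)
    (A : Matrix m σ ℝ) (w : σ → ℝ) (u : ι → ℝ) :
    (B ⊗ₖ A) *ᵥ vec (vecMulVec w u) = vec (vecMulVec (A *ᵥ w) (B *ᵥ u)) := by
  rw [kronecker_mulVec_vec, mul_vecMulVec, vecMulVec_mul, vecMul_transpose]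

theorem vec_vecMulVec_vecMul_kronecker [Fintype σ] {l m : Type*} (B : Matrix ι l ℝ)
    (A : Matrix σ m ℝ) (w : σ → ℝ) (u : ι → ℝ) :
    vec (vecMulVec w u) ᵥ* (B ⊗ₖ A) = vec (vecMulVec (w ᵥ* A) (u ᵥ* B)) := by
  rw [vec_vecMul_kronecker, ← mulVec_transpose, mul_vecMulVec, vecMulVec_mul]

theorem vec_vecMulVec_dotProduct [Fintype σ] (w w' : σ → ℝ) (u u' : ι → ℝ) :
    vec (vecMulVec w u) ⬝ᵥ vec (vecMulVec w' u') = (u ⬝ᵥ u') * (w ⬝ᵥ w') := by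
  simp only [dotProduct, vec, vecMulVec_apply, Fintype.sum_prod_type, Finset.sum_mul_sum]
  exact Finset.sum_congr rfl fun _ _ => Finset.sum_congr rfl fun _ _ => by ring

variable [DecidableEq ι] {ζ : ι → ℝ} {Y₁ Y₂ : Matrix ι κ ℝ}

theorem vecMulVec_one_add_mul_transpose_eq_one [DecidableEq κ]
    (hcard : Fintype.card ι = Fintype.card κ + 1) (hζ1 : ζ ⬝ᵥ 1 = 1) (hY₂₁ : Y₂ᵀ * Y₁ = 1)
    (hζY₁ : ζ ᵥ* Y₁ = 0) (hY₂1 : Y₂ᵀ *ᵥ 1 = 0) : vecMulVec 1 ζ + Y₁ * Y₂ᵀ = 1 := by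
  have e : ι ≃ Unit ⊕ κ := Fintype.equivOfCardEq (by simp [hcard, add_comm])
  rw [vecMulVec_eq Unit, ← fromCols_mul_fromRows, fromCols_mul_fromRows_eq_one_comm e,
    fromRows_mul_fromCols, hY₂₁, ← fromBlocks_one]
  congr 1
  · ext
    simpa [dotProduct] using hζ1
  · rw [← replicateRow_vecMul, hζY₁]
    rfl
  · rw [← replicateCol_mulVec, hY₂1]
    rfl

theorem transpose_mul_eq_mul_transpose_of_resolution (hres : vecMulVec 1 ζ + Y₁ * Y₂ᵀ = 1)
    {L : Matrix ι ι ℝ} (hL1 : L *ᵥ 1 = 0) : Y₂ᵀ * L = Y₂ᵀ * L * Y₁ * Y₂ᵀ := by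
  conv_lhs => rw [← Matrix.mul_one (Y₂ᵀ * L), ← hres]
  rw [Matrix.mul_add, Matrix.mul_assoc Y₂ᵀ L, mul_vecMulVec, hL1, zero_vecMulVec, Matrix.mul_zero,
    zero_add]
  simp only [Matrix.mul_assoc]

theorem eq_vecMulVec_add_mul_mul_transpose (hres : vecMulVec 1 ζ + Y₁ * Y₂ᵀ = 1)
    (X : Matrix σ ι ℝ) : X = vecMulVec (X *ᵥ ζ) 1 + X * Y₂ * Y₁ᵀ := by
  conv_lhs => rw [← Matrix.mul_one X, ← transpose_one, ← hres]
  rw [transpose_add, transpose_vecMulVec, transpose_mul, transpose_transpose, Matrix.mul_add,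
    mul_vecMulVec, Matrix.mul_assoc]

end Matrix

section Observer

variable {ι κ σ : Type*} [Fintype ι] [Fintype κ] [Fintype σ] [DecidableEq σ]

def observerLyapunovMatrix (ζ : ι → ℝ) (Y₂ : Matrix ι κ ℝ) (Pa : Matrix σ σ ℝ) :
    Matrix (ι × σ) (ι × σ) ℝ :=
  vecMulVec ζ ζ ⊗ₖ Pa + (Y₂ * Y₂ᵀ) ⊗ₖ 1

variable {ζ : ι → ℝ} {Y₁ Y₂ : Matrix ι κ ℝ} {Pa : Matrix σ σ ℝ}

theorem observerLyapunovMatrix_posDef [DecidableEq ι] [DecidableEq κ] (hPa : Pa.PosDef)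
    (hres : vecMulVec 1 ζ + Y₁ * Y₂ᵀ = 1) (hY₂₁ : Y₂ᵀ * Y₁ = 1) (hζ : ζ ≠ 0) :
    (observerLyapunovMatrix ζ Y₂ Pa).PosDef := by
  have h₁ : (vecMulVec ζ ζ ⊗ₖ Pa).PosSemidef := by
    simpa using (posSemidef_vecMulVec_self_star ζ).kronecker hPa.posSemidef
  have h₂ : ((Y₂ * Y₂ᵀ) ⊗ₖ (1 : Matrix σ σ ℝ)).PosSemidef := by
    simpa using (posSemidef_self_mul_conjTranspose Y₂).kronecker .one
  refine .of_dotProduct_mulVec_pos (h₁.add h₂).isHermitian fun x hx => ?_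
  refine ((h₁.add h₂).dotProduct_mulVec_nonneg x).lt_of_ne' fun h₀ => hx ?_
  rw [add_mulVec, dotProduct_add, add_eq_zero_iff_of_nonneg (h₁.dotProduct_mulVec_nonneg x)
    (h₂.dotProduct_mulVec_nonneg x), h₁.dotProduct_mulVec_zero_iff,
    h₂.dotProduct_mulVec_zero_iff] at h₀
  obtain ⟨X, rfl⟩ := vec_bijective.surjective x
  simp only [kronecker_mulVec_vec, vec_eq_zero_iff, transpose_vecMulVec, mul_vecMulVec,
    Matrix.one_mul, transpose_mul, transpose_transpose] at h₀
  obtain ⟨hζX, hY₂X⟩ := h₀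
  have hXζ : X *ᵥ ζ = 0 := by
    obtain ⟨j, hj⟩ := Function.ne_iff.mp hζ
    refine mulVec_injective_of_isUnit hPa.isUnit ?_
    rw [mulVec_zero]
    ext i
    simpa [← mulVec_mulVec] using (mul_eq_zero.mp (congr_fun₂ hζX i j)).resolve_right hj
  have hXY₂ : X * Y₂ = 0 := by
    rw [← Matrix.mul_one (X * Y₂), ← hY₂₁, ← Matrix.mul_assoc, Matrix.mul_assoc X, hY₂X,
      Matrix.zero_mul]
  rw [eq_vecMulVec_add_mul_mul_transpose hres X, hXζ, hXY₂]
  simp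

theorem observerLyapunovMatrix_mul_kronecker_one {L : Matrix ι ι ℝ} {Δ : Matrix κ κ ℝ}
    (hζL : ζ ᵥ* L = 0) (hY₂L : Y₂ᵀ * L = Δ * Y₂ᵀ) :
    observerLyapunovMatrix ζ Y₂ Pa * (L ⊗ₖ 1) = (Y₂ * Δ * Y₂ᵀ) ⊗ₖ 1 := by
  rw [observerLyapunovMatrix, Matrix.add_mul, ← mul_kronecker_mul, ← mul_kronecker_mul,
    vecMulVec_mul, hζL, vecMulVec_zero, zero_kronecker, zero_add, Matrix.mul_assoc Y₂, hY₂L,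
    Matrix.mul_one, Matrix.mul_assoc]

theorem dotProduct_mulVec_kronecker_one_eq (Δ : Matrix κ κ ℝ) (x : ι × σ → ℝ) :
    x ⬝ᵥ ((Y₂ * Δ * Y₂ᵀ) ⊗ₖ (1 : Matrix σ σ ℝ)) *ᵥ x
      = (Y₂ᵀ ⊗ₖ (1 : Matrix σ σ ℝ)) *ᵥ x ⬝ᵥ
          (Δ ⊗ₖ (1 : Matrix σ σ ℝ)) *ᵥ ((Y₂ᵀ ⊗ₖ (1 : Matrix σ σ ℝ)) *ᵥ x) := by
  rw [← dotProduct_transpose_mul_mul_mulVec, ← kroneckerMap_transpose, transpose_transpose,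
    transpose_one, ← mul_kronecker_mul, ← mul_kronecker_mul, Matrix.mul_one, Matrix.mul_one]

theorem dotProduct_mulVec_kronecker_one_pos {Δ : Matrix κ κ ℝ} (hΔ : (Δᵀ + Δ).PosDef)
    {y : κ × σ → ℝ} (hy : y ≠ 0) : 0 < y ⬝ᵥ (Δ ⊗ₖ (1 : Matrix σ σ ℝ)) *ᵥ y := by
  refine dotProduct_mulVec_pos_of_posDef_transpose_add ?_ hy
  rw [← kroneckerMap_transpose, transpose_one, ← add_kronecker]
  exact hΔ.kronecker .one

-- `vec (vecMulVec v 1)` is the consensus vector `1 ⊗ v`: its `(i, j)` entry is `v j`.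
theorem exists_eq_vec_vecMulVec_one [DecidableEq ι] (hres : vecMulVec 1 ζ + Y₁ * Y₂ᵀ = 1)
    {x : ι × σ → ℝ} (hx : (Y₂ᵀ ⊗ₖ (1 : Matrix σ σ ℝ)) *ᵥ x = 0) :
    ∃ v : σ → ℝ, x = vec (vecMulVec v 1) := by
  obtain ⟨X, rfl⟩ := vec_bijective.surjective x
  rw [kronecker_mulVec_vec, Matrix.one_mul, transpose_transpose, vec_eq_zero_iff] at hx
  refine ⟨X *ᵥ ζ, ?_⟩
  conv_lhs => rw [eq_vecMulVec_add_mul_mul_transpose hres X, hx]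
  rw [Matrix.zero_mul, add_zero]

theorem vec_vecMulVec_one_vecMul_observerLyapunovMatrix (hPa : Paᵀ = Pa) (hζ1 : ζ ⬝ᵥ 1 = 1)
    (hY₂1 : Y₂ᵀ *ᵥ 1 = 0) (v : σ → ℝ) :
    vec (vecMulVec v 1) ᵥ* observerLyapunovMatrix ζ Y₂ Pa = vec (vecMulVec (Pa *ᵥ v) ζ) := by
  rw [observerLyapunovMatrix, vecMul_add, vec_vecMulVec_vecMul_kronecker,
    vec_vecMulVec_vecMul_kronecker, vecMul_vecMulVec, ← vecMul_vecMul, ← mulVec_transpose, hPa,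
    dotProduct_comm, hζ1, one_smul, ← mulVec_transpose Y₂, hY₂1, zero_vecMul, add_eq_left,
    vec_eq_zero_iff]
  ext
  simp [vecMulVec_apply]

theorem exists_forall_dotProduct_mulVec_mul_sub_smul_le [DecidableEq ι]
    (hres : vecMulVec 1 ζ + Y₁ * Y₂ᵀ = 1) {L : Matrix ι ι ℝ} (hL1 : L *ᵥ 1 = 0)
    (hζL : ζ ᵥ* L = 0) (hΔ : ((Y₂ᵀ * L * Y₁)ᵀ + Y₂ᵀ * L * Y₁).PosDef)
    (A₀ : Matrix (ι × σ) (ι × σ) ℝ) (ρ : ℝ)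
    (hcons : ∀ v : σ → ℝ, v ≠ 0 → vec (vecMulVec v 1) ⬝ᵥ
      (observerLyapunovMatrix ζ Y₂ Pa * A₀ + ρ • observerLyapunovMatrix ζ Y₂ Pa) *ᵥ
        vec (vecMulVec v 1) < 0) :
    ∃ ν₀ > (0 : ℝ), ∀ ν ≥ ν₀, ∀ x,
      x ⬝ᵥ (observerLyapunovMatrix ζ Y₂ Pa * (A₀ - ν • (L ⊗ₖ 1))) *ᵥ x
      ≤ -ρ * (x ⬝ᵥ observerLyapunovMatrix ζ Y₂ Pa *ᵥ x) := by
  set P := observerLyapunovMatrix ζ Y₂ Pa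
  have hcoupling (x : ι × σ → ℝ) := dotProduct_mulVec_kronecker_one_eq (Y₂ := Y₂) (Y₂ᵀ * L * Y₁) x
  rw [← observerLyapunovMatrix_mul_kronecker_one (Pa := Pa) hζL
    (transpose_mul_eq_mul_transpose_of_resolution hres hL1)] at hcoupling
  have hpos {y : κ × σ → ℝ} (hy : y ≠ 0) := dotProduct_mulVec_kronecker_one_pos hΔ hy
  have hnonneg (x : ι × σ → ℝ) : 0 ≤ x ⬝ᵥ (P * (L ⊗ₖ 1)) *ᵥ x := by
    rw [hcoupling]
    rcases eq_or_ne ((Y₂ᵀ ⊗ₖ (1 : Matrix σ σ ℝ)) *ᵥ x) 0 with hy | hy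
    · simp [hy]
    · exact (hpos hy).le
  have hkernel (x : ι × σ → ℝ) (hx : x ≠ 0) (hx₀ : x ⬝ᵥ (P * (L ⊗ₖ 1)) *ᵥ x = 0) :
      x ⬝ᵥ (P * A₀ + ρ • P) *ᵥ x < 0 := by
    rw [hcoupling] at hx₀
    obtain ⟨v, rfl⟩ := exists_eq_vec_vecMulVec_one hres (not_not.mp fun hy => (hpos hy).ne' hx₀)
    exact hcons v (by rintro rfl; simp at hx)
  obtain ⟨ν₀, hν₀, hdom⟩ := exists_forall_dotProduct_mulVec_le_mul hnonneg hkernel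
  refine ⟨ν₀, hν₀, fun ν hν x => ?_⟩
  have := hdom ν hν x
  rw [add_mulVec, dotProduct_add, smul_mulVec, dotProduct_smul, smul_eq_mul] at this
  rw [Matrix.mul_sub, sub_mulVec, dotProduct_sub, mul_smul_comm, smul_mulVec, dotProduct_smul,
    smul_eq_mul]
  linarith

end Observer

section BlockDiagonal

variable {ι σ : Type*} [Fintype ι] [Fintype σ] [DecidableEq ι] {p : ι → Type*}

-- `blockGain ζ H̄` is `H̃ = diag{H̄_i / ζ_i}` and `blockOutput C` is `C̃ = diag{C_i}`.
noncomputable def blockGain (ζ : ι → ℝ) (W : Matrix σ (Σ i, p i) ℝ) : Matrix (ι × σ) (Σ i, p i) ℝ :=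
  of fun x q => if x.1 = q.1 then (ζ q.1)⁻¹ * W x.2 q else 0

def blockOutput (C : ∀ i, Matrix (p i) σ ℝ) : Matrix (Σ i, p i) (ι × σ) ℝ :=
  of fun q x => if q.1 = x.1 then C q.1 q.2 x.2 else 0

theorem blockOutput_mulVec_vec_vecMulVec_one (C : ∀ i, Matrix (p i) σ ℝ) (v : σ → ℝ) :
    blockOutput C *ᵥ vec (vecMulVec v 1) = (of fun q j => C q.1 q.2 j) *ᵥ v := by
  ext q
  simp [blockOutput, mulVec, dotProduct, vec, Fintype.sum_prod_type]

theorem vec_vecMulVec_vecMul_blockGain {ζ : ι → ℝ} (hζ : ∀ i, ζ i ≠ 0)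
    (W : Matrix σ (Σ i, p i) ℝ) (w : σ → ℝ) : vec (vecMulVec w ζ) ᵥ* blockGain ζ W = w ᵥ* W := by
  ext q
  simp [blockGain, vecMul, dotProduct, vec, Fintype.sum_prod_type, vecMulVec_apply, mul_assoc,
    mul_inv_cancel_left₀ (hζ _)]

variable {κ : Type*} [Fintype κ] [DecidableEq σ] [∀ i, Fintype (p i)] {ζ : ι → ℝ}
  {Y₂ : Matrix ι κ ℝ} {Pa A : Matrix σ σ ℝ} {W Y : Matrix σ (Σ i, p i) ℝ}
  {C : ∀ i, Matrix (p i) σ ℝ} {Cstack : Matrix (Σ i, p i) σ ℝ}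

theorem two_mul_dotProduct_mulVec_vec_vecMulVec_one (hPa : Paᵀ = Pa) (hζ : ∀ i, ζ i ≠ 0)
    (hζ1 : ζ ⬝ᵥ 1 = 1) (hY₂1 : Y₂ᵀ *ᵥ 1 = 0) (hPaW : Pa * W = Y)
    (hCstack : Cstack = of fun q j => C q.1 q.2 j) (ρ : ℝ) (v : σ → ℝ) :
    2 * (vec (vecMulVec v 1) ⬝ᵥ (observerLyapunovMatrix ζ Y₂ Pa *
        ((1 : Matrix ι ι ℝ) ⊗ₖ A + blockGain ζ W * blockOutput C)
        + ρ • observerLyapunovMatrix ζ Y₂ Pa) *ᵥ vec (vecMulVec v 1))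
      = v ⬝ᵥ (Pa * A + Aᵀ * Pa + Y * Cstack + Cstackᵀ * Yᵀ + (2 * ρ) • Pa) *ᵥ v := by
  have hP := vec_vecMulVec_one_vecMul_observerLyapunovMatrix hPa hζ1 hY₂1 (Y₂ := Y₂) v
  have hsymm (w : σ → ℝ) : v ⬝ᵥ Pa *ᵥ w = Pa *ᵥ v ⬝ᵥ w := by
    rw [dotProduct_mulVec, ← mulVec_transpose, hPa]
  have hHC : vec (vecMulVec (Pa *ᵥ v) ζ) ⬝ᵥ (blockGain ζ W * blockOutput C) *ᵥ
      vec (vecMulVec v 1) = v ⬝ᵥ (Y * Cstack) *ᵥ v := by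
    rw [← mulVec_mulVec, dotProduct_mulVec, vec_vecMulVec_vecMul_blockGain hζ,
      blockOutput_mulVec_vec_vecMulVec_one, ← hCstack, ← dotProduct_mulVec, ← hsymm, ← hPaW,
      mulVec_mulVec, mulVec_mulVec]
  rw [add_mulVec, dotProduct_add, ← mulVec_mulVec, dotProduct_mulVec, hP, smul_mulVec,
    dotProduct_smul, dotProduct_mulVec (vec (vecMulVec v 1)), hP, add_mulVec, dotProduct_add, hHC,
    kronecker_mulVec_vec_vecMulVec, vec_vecMulVec_dotProduct, vec_vecMulVec_dotProduct, one_mulVec,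
    hζ1, show Aᵀ * Pa = (Pa * A)ᵀ by rw [transpose_mul, hPa], ← transpose_mul]
  simp only [add_mulVec, dotProduct_add, smul_mulVec, dotProduct_smul, dotProduct_transpose_mulVec,
    ← mulVec_mulVec, hsymm, smul_eq_mul]
  ring

theorem dotProduct_mulVec_vec_vecMulVec_one_neg (hPa : Paᵀ = Pa) (hζ : ∀ i, ζ i ≠ 0)
    (hζ1 : ζ ⬝ᵥ 1 = 1) (hY₂1 : Y₂ᵀ *ᵥ 1 = 0) (hPaW : Pa * W = Y)
    (hCstack : Cstack = of fun q j => C q.1 q.2 j) {ρ : ℝ}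
    (hLMI : (-(Pa * A + Aᵀ * Pa + Y * Cstack + Cstackᵀ * Yᵀ + (2 * ρ) • Pa)).PosDef)
    {v : σ → ℝ} (hv : v ≠ 0) :
    vec (vecMulVec v 1) ⬝ᵥ (observerLyapunovMatrix ζ Y₂ Pa *
        ((1 : Matrix ι ι ℝ) ⊗ₖ A + blockGain ζ W * blockOutput C)
        + ρ • observerLyapunovMatrix ζ Y₂ Pa) *ᵥ vec (vecMulVec v 1) < 0 := by
  have := hLMI.dotProduct_mulVec_pos hv
  rw [star_trivial, neg_mulVec, dotProduct_neg,
    ← two_mul_dotProduct_mulVec_vec_vecMulVec_one hPa hζ hζ1 hY₂1 hPaW hCstack] at this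
  linarith

end BlockDiagonal

theorem linear_distributed_observer_exponential_stability_general
    (n mN : ℕ)
    (p : Fin (mN + 1) → ℕ)
    (A : Matrix (Fin n) (Fin n) ℝ)
    (Cm : ∀ i : Fin (mN + 1), Matrix (Fin (p i)) (Fin n) ℝ)
    (Pa : Matrix (Fin n) (Fin n) ℝ) (hPa : Pa.PosDef)
    (Y : Matrix (Fin n) ((i : Fin (mN + 1)) × Fin (p i)) ℝ)
    (ρ : ℝ)
    -- the stacked output matrix C
    (Cstack : Matrix ((i : Fin (mN + 1)) × Fin (p i)) (Fin n) ℝ)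
    (hCstack : Cstack = Matrix.of fun q j => Cm q.1 q.2 j)
    -- the LMI  PaA + AᵀPa + YC + CᵀYᵀ + 2ρPa ≺ 0
    (hLMI : (-(Pa * A + Aᵀ * Pa + Y * Cstack + Cstackᵀ * Yᵀ + (2 * ρ) • Pa)).PosDef)
    -- graph data: Laplacian L, positive normalized left 0-eigenvector ζ
    (L : Matrix (Fin (mN + 1)) (Fin (mN + 1)) ℝ)
    (ζ : Fin (mN + 1) → ℝ)
    (hζpos : ∀ i, 0 < ζ i)
    (hζ1 : ζ ⬝ᵥ (fun _ => (1 : ℝ)) = 1)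
    (hL1 : L.mulVec (fun _ => (1 : ℝ)) = 0)
    (hζL : Matrix.vecMul ζ L = 0)
    -- Lemma-1 similarity data
    (Y₁ Y₂ : Matrix (Fin (mN + 1)) (Fin mN) ℝ)
    (hY21 : Y₂ᵀ * Y₁ = 1)
    (hζY1 : Matrix.vecMul ζ Y₁ = 0)
    (hY2one : Y₂ᵀ.mulVec (fun _ => (1 : ℝ)) = 0)
    -- Δᵀ + Δ ≻ 0 for Δ = Y₂ᵀ L Y₁
    (hΔ : ((Y₂ᵀ * L * Y₁)ᵀ + Y₂ᵀ * L * Y₁).PosDef) :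
    -- block matrices of the error dynamics, with gains H_i = H̄_i / ζ_i
    let Atil : Matrix (Fin (mN + 1) × Fin n) (Fin (mN + 1) × Fin n) ℝ :=
      (1 : Matrix (Fin (mN + 1)) (Fin (mN + 1)) ℝ) ⊗ₖ A
    let Htil : Matrix (Fin (mN + 1) × Fin n) ((i : Fin (mN + 1)) × Fin (p i)) ℝ :=
      Matrix.of fun x q => if x.1 = q.1 then (ζ q.1)⁻¹ * (Pa⁻¹ * Y) x.2 q else 0
    let Ctil : Matrix ((i : Fin (mN + 1)) × Fin (p i)) (Fin (mN + 1) × Fin n) ℝ :=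
      Matrix.of fun q x => if q.1 = x.1 then Cm q.1 q.2 x.2 else 0
    ∃ ν₀ > (0 : ℝ), ∃ κ > (0 : ℝ), ∀ ν : ℝ, ν₀ ≤ ν →
      ∀ e : ℝ → (Fin (mN + 1) × Fin n → ℝ),
        (∀ t : ℝ, 0 ≤ t → HasDerivAt e
          ((Atil + Htil * Ctil
              - ν • (L ⊗ₖ (1 : Matrix (Fin n) (Fin n) ℝ))).mulVec (e t)) t) →
        ∀ t : ℝ, 0 ≤ t →
          euclNorm (e t) ≤ κ * Real.exp (-ρ * t) * euclNorm (e 0) := by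
  intro Atil Htil Ctil
  have hζ : ∀ i, ζ i ≠ 0 := fun i => (hζpos i).ne'
  have hPaT : Paᵀ = Pa := by simpa using hPa.isHermitian.eq
  have hPaY : Pa * (Pa⁻¹ * Y) = Y :=
    mul_nonsing_inv_cancel_left Pa Y ((isUnit_iff_isUnit_det Pa).mp hPa.isUnit)
  have hres := vecMulVec_one_add_mul_transpose_eq_one (by simp) hζ1 hY21 hζY1 hY2one
  obtain ⟨ν₀, hν₀, hgain⟩ := exists_forall_dotProduct_mulVec_mul_sub_smul_le (Pa := Pa) hres hL1
    hζL hΔ (Atil + Htil * Ctil) ρ fun v hv =>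
      dotProduct_mulVec_vec_vecMulVec_one_neg hPaT hζ hζ1 hY2one hPaY hCstack hLMI hv
  obtain ⟨κ, hκ, hstable⟩ := exists_euclNorm_le_of_lyapunov
    (observerLyapunovMatrix_posDef hPa hres hY21 (by rintro rfl; simp at hζ1)) ρ
  exact ⟨ν₀, hν₀, κ, hκ, fun ν hν e he => hstable _ (hgain ν hν) e he⟩

theorem linear_distributed_observer_exponential_stability
    (n mN : ℕ) (hn : 0 < n)
    (p : Fin (mN + 1) → ℕ) (hp : ∀ i, 0 < p i)
    (A : Matrix (Fin n) (Fin n) ℝ)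
    (Cm : ∀ i : Fin (mN + 1), Matrix (Fin (p i)) (Fin n) ℝ)
    (Pa : Matrix (Fin n) (Fin n) ℝ) (hPa : Pa.PosDef)
    (Y : Matrix (Fin n) ((i : Fin (mN + 1)) × Fin (p i)) ℝ)
    (ρ : ℝ) (hρ : 0 < ρ)
    -- the stacked output matrix C
    (Cstack : Matrix ((i : Fin (mN + 1)) × Fin (p i)) (Fin n) ℝ)
    (hCstack : Cstack = Matrix.of fun q j => Cm q.1 q.2 j)
    -- the LMI  PaA + AᵀPa + YC + CᵀYᵀ + 2ρPa ≺ 0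
    (hLMI : (-(Pa * A + Aᵀ * Pa + Y * Cstack + Cstackᵀ * Yᵀ + (2 * ρ) • Pa)).PosDef)
    -- graph data: Laplacian L, positive normalized left 0-eigenvector ζ
    (L : Matrix (Fin (mN + 1)) (Fin (mN + 1)) ℝ)
    (ζ : Fin (mN + 1) → ℝ)
    (hζpos : ∀ i, 0 < ζ i)
    (hζ1 : ζ ⬝ᵥ (fun _ => (1 : ℝ)) = 1)
    (hL1 : L.mulVec (fun _ => (1 : ℝ)) = 0)
    (hζL : Matrix.vecMul ζ L = 0)
    -- Lemma-1 similarity data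
    (Y₁ Y₂ : Matrix (Fin (mN + 1)) (Fin mN) ℝ)
    (hY21 : Y₂ᵀ * Y₁ = 1)
    (hζY1 : Matrix.vecMul ζ Y₁ = 0)
    (hY2one : Y₂ᵀ.mulVec (fun _ => (1 : ℝ)) = 0)
    -- Δᵀ + Δ ≻ 0 for Δ = Y₂ᵀ L Y₁
    (hΔ : ((Y₂ᵀ * L * Y₁)ᵀ + Y₂ᵀ * L * Y₁).PosDef) :
    -- block matrices of the error dynamics, with gains H_i = H̄_i / ζ_i
    let Atil : Matrix (Fin (mN + 1) × Fin n) (Fin (mN + 1) × Fin n) ℝ :=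
      (1 : Matrix (Fin (mN + 1)) (Fin (mN + 1)) ℝ) ⊗ₖ A
    let Htil : Matrix (Fin (mN + 1) × Fin n) ((i : Fin (mN + 1)) × Fin (p i)) ℝ :=
      Matrix.of fun x q => if x.1 = q.1 then (ζ q.1)⁻¹ * (Pa⁻¹ * Y) x.2 q else 0
    let Ctil : Matrix ((i : Fin (mN + 1)) × Fin (p i)) (Fin (mN + 1) × Fin n) ℝ :=
      Matrix.of fun q x => if q.1 = x.1 then Cm q.1 q.2 x.2 else 0
    ∃ ν₀ > (0 : ℝ), ∃ κ > (0 : ℝ), ∀ ν : ℝ, ν₀ ≤ ν →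
      ∀ e : ℝ → (Fin (mN + 1) × Fin n → ℝ),
        (∀ t : ℝ, 0 ≤ t → HasDerivAt e
          ((Atil + Htil * Ctil
              - ν • (L ⊗ₖ (1 : Matrix (Fin n) (Fin n) ℝ))).mulVec (e t)) t) →
        ∀ t : ℝ, 0 ≤ t →
          euclNorm (e t) ≤ κ * Real.exp (-ρ * t) * euclNorm (e 0) :=
  linear_distributed_observer_exponential_stability_general n mN p A Cm Pa hPa Y ρ Cstack hCstack
    hLMI L ζ hζpos hζ1 hL1 hζL Y₁ Y₂ hY21 hζY1 hY2one hΔ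
end

section
/- Let G₀ ∈ ℝ^{n×n}, C ∈ ℝ^{p×n} with CG₀ = 0, let H ∈ ℝ^{n×p} and μ ∈ ℝ, and set G_d = μG₀ + I_n. Define F : ℝ^n → ℝ^n by F(x) = exp(μ(G₀ + I_n)·ln|Cx|)·H·Cx if Cx ≠ 0 and F(x) = 0 if Cx = 0, where |·| is the Euclidean norm. Then F is homogeneous of degree μ with respect to the dilation d(s) = exp(sG_d): for all s ∈ ℝ and all x ∈ ℝ^n, F(exp(sG_d)x) = e^{μs}·exp(sG_d)·F(x). -/
/-!
Since `C G₀ = 0`, the series of `exp (t • G₀)` collapses under `C`, so the dilation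
`d(s) = exp (s • (μ • G₀ + 1)) = eˢ • exp ((s μ) • G₀)` multiplies the output `C x` by `eˢ`
and shifts `ln |C x|` by `s`. For the gain
`g(r) = exp ((μ ln r) • (G₀ + 1)) = r^μ • exp ((μ ln r) • G₀)` this shift gives
`eˢ • g(eˢ r) = e^{μ s} • d(s) * g(r)`, which is the homogeneity of `F` off `{C x = 0}`;
that set is preserved by `d(s)`, and `F` vanishes on it.
-/

open Matrix

section EuclNorm

variable {ι : Type*} [Fintype ι]

theorem euclNorm_eq_norm_toLp (x : ι → ℝ) :
    euclNorm x = ‖(WithLp.toLp 2 x : EuclideanSpace ℝ ι)‖ := by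
  simp [euclNorm, EuclideanSpace.norm_eq, dotProduct, sq]

theorem euclNorm_smul (c : ℝ) (x : ι → ℝ) : euclNorm (c • x) = |c| * euclNorm x := by
  simp only [euclNorm_eq_norm_toLp, WithLp.toLp_smul, norm_smul, Real.norm_eq_abs]

theorem euclNorm_ne_zero {x : ι → ℝ} (hx : x ≠ 0) : euclNorm x ≠ 0 := by
  simpa [euclNorm_eq_norm_toLp] using hx

end EuclNorm

namespace Matrix

variable {ι : Type*} [Fintype ι] [DecidableEq ι]

theorem exp_add_smul_one (A : Matrix ι ι ℝ) (b : ℝ) :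
    NormedSpace.exp (A + b • 1) = Real.exp b • NormedSpace.exp A := by
  have hexp_scalar : NormedSpace.exp (b • 1 : Matrix ι ι ℝ) = Real.exp b • 1 := by
    rw [smul_one_eq_diagonal, exp_diagonal, Pi.exp_def, smul_one_eq_diagonal, Real.exp_eq_exp_ℝ]
  rw [exp_add_of_commute _ _ ((Commute.one_right A).smul_right b), hexp_scalar, Matrix.mul_smul,
    mul_one]

theorem exp_smul_add_one (A : Matrix ι ι ℝ) (c : ℝ) :
    NormedSpace.exp (c • (A + 1)) = Real.exp c • NormedSpace.exp (c • A) := by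
  rw [smul_add, exp_add_smul_one]

theorem exp_add_smul (A : Matrix ι ι ℝ) (a b : ℝ) :
    NormedSpace.exp ((a + b) • A) = NormedSpace.exp (a • A) * NormedSpace.exp (b • A) := by
  rw [add_smul, exp_add_of_commute _ _ (((Commute.refl A).smul_left a).smul_right b)]

open scoped Norms.Operator in
theorem mul_exp_of_mul_eq_zero {κ : Type*} {C : Matrix κ ι ℝ} {A : Matrix ι ι ℝ} (h : C * A = 0) :
    C * NormedSpace.exp A = C := by
  let mulC := (mulLeftLinearMap ι ℝ C).toContinuousLinearMap
  calc C * NormedSpace.exp A = mulC (∑' k : ℕ, (k.factorial⁻¹ : ℝ) • A ^ k) := by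
        rw [NormedSpace.exp_eq_tsum ℝ]; rfl
    _ = ∑' k : ℕ, C * ((k.factorial⁻¹ : ℝ) • A ^ k) :=
        mulC.map_tsum (NormedSpace.expSeries_summable' A)
    _ = C := by
        rw [tsum_eq_single 0]
        · simp
        · intro k hk
          obtain ⟨k, rfl⟩ := Nat.exists_eq_succ_of_ne_zero hk
          rw [pow_succ', Matrix.mul_smul, ← Matrix.mul_assoc, h, Matrix.zero_mul, smul_zero]

end Matrix

section Homogeneity

variable {ι : Type*} [Fintype ι] [DecidableEq ι] (μ : ℝ) (G₀ : Matrix ι ι ℝ)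

noncomputable def dilation (s : ℝ) : Matrix ι ι ℝ :=
  NormedSpace.exp (s • (μ • G₀ + 1))

noncomputable def injectionGain (r : ℝ) : Matrix ι ι ℝ :=
  NormedSpace.exp ((μ * Real.log r) • (G₀ + 1))

theorem dilation_eq (s : ℝ) :
    dilation μ G₀ s = Real.exp s • NormedSpace.exp ((s * μ) • G₀) := by
  rw [dilation, smul_add, smul_smul, Matrix.exp_add_smul_one]

theorem mul_dilation_of_mul_eq_zero {κ : Type*} {C : Matrix κ ι ℝ} (h : C * G₀ = 0) (s : ℝ) :
    C * dilation μ G₀ s = Real.exp s • C := by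
  rw [dilation_eq, Matrix.mul_smul,
    Matrix.mul_exp_of_mul_eq_zero (by rw [Matrix.mul_smul, h, smul_zero])]

theorem exp_smul_injectionGain_exp_mul {r : ℝ} (hr : r ≠ 0) (s : ℝ) :
    Real.exp s • injectionGain μ G₀ (Real.exp s * r)
      = Real.exp (μ * s) • (dilation μ G₀ s * injectionGain μ G₀ r) := by
  have hlog : μ * Real.log (Real.exp s * r) = s * μ + μ * Real.log r := by
    rw [Real.log_mul (Real.exp_ne_zero s) hr, Real.log_exp]; ring
  rw [injectionGain, injectionGain, hlog, dilation_eq, Matrix.exp_smul_add_one,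
    Matrix.exp_smul_add_one, Matrix.exp_add_smul, smul_mul_smul, smul_smul, smul_smul,
    ← Real.exp_add, ← Real.exp_add, ← Real.exp_add]
  congr 2
  ring

end Homogeneity

theorem injection_term_homogeneous
    (n p : ℕ)
    (G₀ : Matrix (Fin n) (Fin n) ℝ)
    (C : Matrix (Fin p) (Fin n) ℝ)
    (hCG₀ : C * G₀ = 0)
    (H : Matrix (Fin n) (Fin p) ℝ)
    (μ : ℝ)
    (F : (Fin n → ℝ) → (Fin n → ℝ))
    (hF0 : ∀ x : Fin n → ℝ, C.mulVec x = 0 → F x = 0)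
    (hF : ∀ x : Fin n → ℝ, C.mulVec x ≠ 0 →
      F x = (NormedSpace.exp
          ((μ * Real.log (euclNorm (C.mulVec x))) • (G₀ + 1))).mulVec
        (H.mulVec (C.mulVec x))) :
    ∀ (s : ℝ) (x : Fin n → ℝ),
      F ((NormedSpace.exp (s • (μ • G₀ + 1))).mulVec x)
        = Real.exp (μ * s) • (NormedSpace.exp (s • (μ • G₀ + 1))).mulVec (F x) := by
  intro s x
  change F (dilation μ G₀ s *ᵥ x) = Real.exp (μ * s) • dilation μ G₀ s *ᵥ F x
  have hF_gain : ∀ x, C *ᵥ x ≠ 0 → F x = injectionGain μ G₀ (euclNorm (C *ᵥ x)) *ᵥ H *ᵥ C *ᵥ x := hF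
  have hCx : C *ᵥ (dilation μ G₀ s *ᵥ x) = Real.exp s • C *ᵥ x := by
    rw [mulVec_mulVec, mul_dilation_of_mul_eq_zero μ G₀ hCG₀, smul_mulVec]
  by_cases hx : C *ᵥ x = 0
  · rw [hF0 x hx, hF0 _ (by rw [hCx, hx, smul_zero]), mulVec_zero, smul_zero]
  · have hCdx : C *ᵥ (dilation μ G₀ s *ᵥ x) ≠ 0 := by
      rw [hCx]
      exact smul_ne_zero (Real.exp_ne_zero s) hx
    rw [hF_gain _ hCdx, hF_gain x hx, hCx, euclNorm_smul, abs_of_pos (Real.exp_pos s), mulVec_smul,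
      mulVec_smul, ← smul_mulVec, exp_smul_injectionGain_exp_mul μ G₀ (euclNorm_ne_zero hx),
      smul_mulVec, ← mulVec_mulVec]
end

section
/- Let V : [0,∞) → [0,∞) be continuous and nonincreasing, differentiable at every t with V(t) > 0, and suppose there exist c > 0, μ₀ ∈ (−1, 0) and μ∞ > 0 such that V′(t) ≤ −c·V(t)^{1+μ∞} whenever V(t) ≥ 1 and V′(t) ≤ −c·V(t)^{1+μ₀} whenever 0 < V(t) ≤ 1. Then V(t) = 0 for every t ≥ 1/(c·μ∞) + 1/(c·(−μ₀)); in particular the time needed for V to vanish is bounded by 1/(cμ∞) + 1/(c(−μ₀)), uniformly over all initial values V(0) ≥ 0. -/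
/-
Statement 12 (fixed-time comparison lemma; mechanism of Theorem 5).
The power is the real power (rpow).
-/

theorem fixed_time_comparison
    (V : ℝ → ℝ) (c μ₀ μinf : ℝ)
    (hc : 0 < c) (hμ₀1 : -1 < μ₀) (hμ₀0 : μ₀ < 0) (hμinf : 0 < μinf)
    (hVnonneg : ∀ t, 0 ≤ t → 0 ≤ V t)
    (hVcont : ContinuousOn V (Set.Ici 0))
    (hVmono : AntitoneOn V (Set.Ici 0))
    (hVder : ∀ t, 0 ≤ t → 0 < V t →
      ∃ d : ℝ, HasDerivWithinAt V d (Set.Ici 0) t ∧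
        (1 ≤ V t → d ≤ -c * V t ^ (1 + μinf)) ∧
        (V t ≤ 1 → d ≤ -c * V t ^ (1 + μ₀))) :
    ∀ t : ℝ, 1 / (c * μinf) + 1 / (c * (-μ₀)) ≤ t → V t = 0 := by
  set T1 : ℝ := 1 / (c * μinf) with hT1def
  set T2 : ℝ := 1 / (c * (-μ₀)) with hT2def
  have hcμ : 0 < c * μinf := mul_pos hc hμinf
  have hp : 0 < -μ₀ := neg_pos.mpr hμ₀0
  have hcp : 0 < c * (-μ₀) := mul_pos hc hp
  have hT1pos : 0 < T1 := by positivity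
  have hT2pos : 0 < T2 := by positivity
  -- Step 1 : V T1 ≤ 1
  have step1 : V T1 ≤ 1 := by
    by_contra hgt
    push_neg at hgt
    have hpos : ∀ s ∈ Set.Icc (0 : ℝ) T1, 1 < V s := by
      intro s hs
      exact lt_of_lt_of_le hgt (hVmono hs.1 hT1pos.le hs.2)
    set h : ℝ → ℝ := fun s => V s ^ (-μinf) with hdef
    have hcont : ContinuousOn h (Set.Icc (0 : ℝ) T1) := by
      apply ContinuousOn.rpow_const (hVcont.mono (fun x hx => hx.1))
      intro x hx
      exact Or.inl (by linarith [hpos x hx])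
    have hint : interior (Set.Icc (0 : ℝ) T1) = Set.Ioo 0 T1 := interior_Icc
    have key : ∀ x ∈ interior (Set.Icc (0 : ℝ) T1),
        DifferentiableAt ℝ h x ∧ c * μinf ≤ deriv h x := by
      intro x hx
      rw [hint] at hx
      have hx0 : (0:ℝ) < x := hx.1
      have hVx : 1 < V x := hpos x ⟨hx0.le, hx.2.le⟩
      have hVx0 : 0 < V x := by linarith
      obtain ⟨d, hd, hd1, _⟩ := hVder x hx0.le hVx0
      have hD : HasDerivAt V d x := hd.hasDerivAt (Ici_mem_nhds hx0)
      have hDh : HasDerivAt h (d * (-μinf) * V x ^ (-μinf - 1)) x :=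
        hD.rpow_const (Or.inl (by linarith))
      refine ⟨hDh.differentiableAt, ?_⟩
      rw [hDh.deriv]
      have hdle : d ≤ -c * V x ^ (1 + μinf) := hd1 hVx.le
      have hfac : (-μinf) * V x ^ (-μinf - 1) < 0 :=
        mul_neg_of_neg_of_pos (by linarith) (Real.rpow_pos_of_pos hVx0 _)
      have hmul : (-c * V x ^ (1 + μinf)) * ((-μinf) * V x ^ (-μinf - 1)) ≤
          d * ((-μinf) * V x ^ (-μinf - 1)) :=
        mul_le_mul_of_nonpos_right hdle hfac.le
      have hprod : V x ^ (1 + μinf) * V x ^ (-μinf - 1) = 1 := by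
        have he : (1 + μinf) + (-μinf - 1) = 0 := by ring
        rw [← Real.rpow_add hVx0, he, Real.rpow_zero]
      calc c * μinf = (-c * V x ^ (1 + μinf)) * ((-μinf) * V x ^ (-μinf - 1)) := by
            have heq : (-c * V x ^ (1 + μinf)) * ((-μinf) * V x ^ (-μinf - 1))
                = c * μinf * (V x ^ (1 + μinf) * V x ^ (-μinf - 1)) := by ring
            rw [heq, hprod, mul_one]
        _ ≤ d * ((-μinf) * V x ^ (-μinf - 1)) := hmul
        _ = d * (-μinf) * V x ^ (-μinf - 1) := by ring
    have := (convex_Icc (0:ℝ) T1).mul_sub_le_image_sub_of_le_deriv hcont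
      (fun x hx => (key x hx).1.differentiableWithinAt)
      (fun x hx => (key x hx).2) 0 (Set.left_mem_Icc.mpr hT1pos.le)
      T1 (Set.right_mem_Icc.mpr hT1pos.le) hT1pos.le
    have hCT : c * μinf * (T1 - 0) = 1 := by
      rw [sub_zero, hT1def]; exact mul_one_div_cancel hcμ.ne'
    have hhT1 : h T1 < 1 :=
      Real.rpow_lt_one_of_one_lt_of_neg hgt (by linarith)
    have hh0 : 0 < h 0 :=
      Real.rpow_pos_of_pos (by linarith [hpos 0 ⟨le_refl 0, hT1pos.le⟩]) _
    rw [hCT] at this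
    linarith
  -- Step 2
  intro t ht
  by_contra hVt
  have ht0 : 0 ≤ t := by linarith
  have hVtpos : 0 < V t := lt_of_le_of_ne (hVnonneg t ht0) (Ne.symm hVt)
  have hT1t : T1 ≤ t := by linarith
  have hrange : ∀ s ∈ Set.Icc T1 t, 0 < V s ∧ V s ≤ 1 := by
    intro s hs
    have hs0 : (0:ℝ) ≤ s := le_trans hT1pos.le hs.1
    constructor
    · exact lt_of_lt_of_le hVtpos (hVmono hs0 ht0 hs.2)
    · exact le_trans (hVmono (Set.mem_Ici.mpr hT1pos.le) hs0 hs.1) step1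
  set g : ℝ → ℝ := fun s => V s ^ (-μ₀) with gdef
  have gcont : ContinuousOn g (Set.Icc T1 t) := by
    apply ContinuousOn.rpow_const (hVcont.mono (fun x hx => le_trans hT1pos.le hx.1))
    intro x hx
    exact Or.inl (ne_of_gt (hrange x hx).1)
  have key : ∀ x ∈ interior (Set.Icc T1 t),
      DifferentiableAt ℝ g x ∧ deriv g x ≤ -(c * (-μ₀)) := by
    intro x hx
    rw [interior_Icc] at hx
    have hx0 : (0:ℝ) < x := lt_trans hT1pos hx.1
    obtain ⟨hVx0, hVx1⟩ := hrange x ⟨hx.1.le, hx.2.le⟩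
    obtain ⟨d, hd, _, hd2⟩ := hVder x hx0.le hVx0
    have hD : HasDerivAt V d x := hd.hasDerivAt (Ici_mem_nhds hx0)
    have hDg : HasDerivAt g (d * (-μ₀) * V x ^ (-μ₀ - 1)) x :=
      hD.rpow_const (Or.inl (ne_of_gt hVx0))
    refine ⟨hDg.differentiableAt, ?_⟩
    rw [hDg.deriv]
    have hdle : d ≤ -c * V x ^ (1 + μ₀) := hd2 hVx1
    have hfac : 0 < (-μ₀) * V x ^ (-μ₀ - 1) :=
      mul_pos hp (Real.rpow_pos_of_pos hVx0 _)
    have hmul : d * ((-μ₀) * V x ^ (-μ₀ - 1)) ≤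
        (-c * V x ^ (1 + μ₀)) * ((-μ₀) * V x ^ (-μ₀ - 1)) :=
      mul_le_mul_of_nonneg_right hdle hfac.le
    have hprod : V x ^ (1 + μ₀) * V x ^ (-μ₀ - 1) = 1 := by
      have he : (1 + μ₀) + (-μ₀ - 1) = 0 := by ring
      rw [← Real.rpow_add hVx0, he, Real.rpow_zero]
    calc d * (-μ₀) * V x ^ (-μ₀ - 1) = d * ((-μ₀) * V x ^ (-μ₀ - 1)) := by ring
      _ ≤ (-c * V x ^ (1 + μ₀)) * ((-μ₀) * V x ^ (-μ₀ - 1)) := hmul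
      _ = -(c * (-μ₀)) := by
          have heq : (-c * V x ^ (1 + μ₀)) * ((-μ₀) * V x ^ (-μ₀ - 1))
              = -(c * (-μ₀)) * (V x ^ (1 + μ₀) * V x ^ (-μ₀ - 1)) := by ring
          rw [heq, hprod, mul_one]
  have hmvt := (convex_Icc T1 t).image_sub_le_mul_sub_of_deriv_le gcont
    (fun x hx => (key x hx).1.differentiableWithinAt)
    (fun x hx => (key x hx).2) T1 (Set.left_mem_Icc.mpr hT1t)
    t (Set.right_mem_Icc.mpr hT1t) hT1t
  have hbound : -(c * (-μ₀)) * (t - T1) ≤ -1 := by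
    have h1 : T2 ≤ t - T1 := by linarith
    have h2 : c * (-μ₀) * T2 = 1 := by
      rw [hT2def]; exact mul_one_div_cancel hcp.ne'
    nlinarith
  have hgT1 : g T1 ≤ 1 :=
    Real.rpow_le_one (hVnonneg T1 hT1pos.le) ((hrange T1 ⟨le_refl T1, hT1t⟩).2) hp.le
  have hgt : 0 < g t := Real.rpow_pos_of_pos hVtpos _
  linarith
end
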